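/- arXiv:1703.02908 — 5 statements merged into one kernel-verified Lean document; each statement's English description precedes it below -/
import Mathlib

section
/- Let α ∈ (0,2) and s ∈ (0,2). Define G_s(x) = (1/π) ∫_0^∞ cos(xξ) e^{-ξ^α} ξ^s dξ (which equals ((-Δ)^{s/2} K_1^α)(x)). Then there exists a constant C (depending on α and s) such that |G_s(x)| ≤ C |x|^{-(s+1)} for all x with |x| ≥ 1. -/
/-!
Write `G_s(x) = π⁻¹ ∫₀^∞ cos(|x| ξ) f(ξ) dξ` with `f(ξ) = ξ^s e^{-ξ^α}` and split the integral
at `ε = 1/|x|`. On `(0, ε]` the bound `|f(ξ)| ≤ ξ^s` gives `O(ε^{s+1})`. On `(ε, ∞)` integrate by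
parts: a derivative of a combination of the functions `ξ^{b+jα} e^{-ξ^α}` is again such a
combination with `b` lowered by one, and such a combination is `O(ξ^b)`. Each integration by parts
therefore costs a boundary term `O(ε^{b+1})` and a factor `ε`, and once `b < -1` the remaining
integral is at most `∫_ε^∞ ξ^b dξ = O(ε^{b+1})`.
-/

open MeasureTheory Real Set Filter

/-- `G_s(x) = (1/π) ∫_0^∞ cos(xξ) e^{-ξ^α} ξ^s dξ`, which equals `((-Δ)^{s/2} K_1^α)(x)`. -/
noncomputable def Gfun (α s x : ℝ) : ℝ :=
  (1 / Real.pi) * ∫ ξ in Set.Ioi (0 : ℝ), Real.cos (x * ξ) * Real.exp (-ξ ^ α) * ξ ^ s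

open scoped Topology Nat

noncomputable def kernelTerm (α β ξ : ℝ) : ℝ := ξ ^ β * exp (-ξ ^ α)

lemma kernelTerm_nonneg (α β : ℝ) {ξ : ℝ} (hξ : 0 ≤ ξ) : 0 ≤ kernelTerm α β ξ := by
  unfold kernelTerm; positivity

lemma pow_mul_exp_neg_le_factorial {t : ℝ} (ht : 0 ≤ t) (k : ℕ) : t ^ k * exp (-t) ≤ k ! := by
  have := Real.pow_div_factorial_le_exp t ht k
  rw [div_le_iff₀ (by positivity)] at this
  rw [exp_neg, ← div_eq_mul_inv, div_le_iff₀ (exp_pos t)]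
  linarith

lemma kernelTerm_add_mul_le (α b : ℝ) (k : ℕ) {ξ : ℝ} (hξ : 0 < ξ) :
    kernelTerm α (b + k * α) ξ ≤ k ! * ξ ^ b := by
  have hsplit : ξ ^ (b + k * α) = ξ ^ b * (ξ ^ α) ^ k := by
    rw [rpow_add hξ, mul_comm (k : ℝ), rpow_mul_natCast hξ.le]
  rw [kernelTerm, hsplit, mul_assoc, mul_comm ((k ! : ℕ) : ℝ)]
  exact mul_le_mul_of_nonneg_left (pow_mul_exp_neg_le_factorial (by positivity) k)
    (by positivity)

lemma hasDerivAt_kernelTerm (α β : ℝ) {ξ : ℝ} (hξ : 0 < ξ) :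
    HasDerivAt (kernelTerm α β)
      (β * kernelTerm α (β - 1) ξ - α * kernelTerm α (β - 1 + α) ξ) ξ := by
  have hexp : HasDerivAt (fun x => exp (-x ^ α)) (exp (-ξ ^ α) * -(α * ξ ^ (α - 1))) ξ :=
    (hasDerivAt_rpow_const (Or.inl hξ.ne')).neg.exp
  refine ((hasDerivAt_rpow_const (p := β) (Or.inl hξ.ne')).mul hexp).congr_deriv ?_
  rw [kernelTerm, kernelTerm, rpow_add hξ, rpow_sub_one hξ.ne', rpow_sub_one hξ.ne']
  ring

lemma continuousOn_kernelTerm (α β : ℝ) : ContinuousOn (kernelTerm α β) (Ioi 0) :=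
  fun _ hξ => (hasDerivAt_kernelTerm α β hξ).continuousAt.continuousWithinAt

lemma integrableOn_kernelTerm {α : ℝ} (hα : 0 < α) (β : ℝ) {ε : ℝ} (hε : 0 < ε) :
    IntegrableOn (kernelTerm α β) (Ioi ε) := by
  obtain ⟨k, hk⟩ := exists_nat_gt ((β + 1) / α)
  have hk' : β - k * α < -1 := by
    rw [div_lt_iff₀ hα] at hk; linarith
  refine ((integrableOn_Ioi_rpow_of_lt hk' hε).const_mul (k ! : ℝ)).mono'
    (((continuousOn_kernelTerm α β).mono (Ioi_subset_Ioi hε.le)).aestronglyMeasurable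
      measurableSet_Ioi) ?_
  refine (ae_restrict_iff' measurableSet_Ioi).mpr (Eventually.of_forall fun ξ hξ => ?_)
  have hξ0 : 0 < ξ := hε.trans hξ
  rw [norm_of_nonneg (kernelTerm_nonneg α β hξ0.le)]
  simpa using kernelTerm_add_mul_le α (β - k * α) k hξ0

lemma tendsto_kernelTerm_atTop {α : ℝ} (hα : 0 < α) (β : ℝ) :
    Tendsto (kernelTerm α β) atTop (𝓝 0) := by
  have h := (tendsto_rpow_mul_exp_neg_mul_atTop_nhds_zero (β / α) 1 one_pos).comp
    (tendsto_rpow_atTop hα)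
  refine h.congr' ?_
  filter_upwards [eventually_gt_atTop 0] with ξ hξ
  simp only [Function.comp_apply, kernelTerm, neg_one_mul, ← rpow_mul hξ.le,
    mul_div_cancel₀ β hα.ne']

def kernelSpan (α b : ℝ) : Submodule ℝ (ℝ → ℝ) :=
  Submodule.span ℝ (range fun j : ℕ => kernelTerm α (b + j * α))

lemma kernelTerm_mem_kernelSpan (α b : ℝ) (j : ℕ) : kernelTerm α (b + j * α) ∈ kernelSpan α b :=
  Submodule.subset_span ⟨j, rfl⟩

section kernelSpan

variable {α b : ℝ} {g : ℝ → ℝ}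

lemma exists_abs_le_rpow_of_mem_kernelSpan (hg : g ∈ kernelSpan α b) :
    ∃ C, ∀ ξ > 0, |g ξ| ≤ C * ξ ^ b := by
  induction hg using Submodule.span_induction with
  | mem f hf =>
    obtain ⟨j, rfl⟩ := hf
    exact ⟨j !, fun ξ hξ => (abs_of_nonneg (kernelTerm_nonneg α _ hξ.le)).trans_le
      (kernelTerm_add_mul_le α b j hξ)⟩
  | zero => exact ⟨0, fun ξ _ => by simp⟩
  | add f h _ _ hf hh =>
    obtain ⟨C, hC⟩ := hf
    obtain ⟨D, hD⟩ := hh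
    exact ⟨C + D, fun ξ hξ => (abs_add_le _ _).trans (by linarith [hC ξ hξ, hD ξ hξ])⟩
  | smul a f _ hf =>
    obtain ⟨C, hC⟩ := hf
    refine ⟨|a| * C, fun ξ hξ => ?_⟩
    rw [Pi.smul_apply, smul_eq_mul, abs_mul, mul_assoc]
    exact mul_le_mul_of_nonneg_left (hC ξ hξ) (abs_nonneg a)

lemma exists_hasDerivAt_of_mem_kernelSpan (hg : g ∈ kernelSpan α b) :
    ∃ g' ∈ kernelSpan α (b - 1), ∀ ξ > 0, HasDerivAt g (g' ξ) ξ := by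
  induction hg using Submodule.span_induction with
  | mem f hf =>
    obtain ⟨j, rfl⟩ := hf
    have e₀ : b + j * α - 1 = (b - 1) + j * α := by ring
    have e₁ : b + j * α - 1 + α = (b - 1) + ((j + 1 : ℕ) : ℝ) * α := by push_cast; ring
    refine ⟨(b + j * α) • kernelTerm α ((b - 1) + j * α)
        - α • kernelTerm α ((b - 1) + ((j + 1 : ℕ) : ℝ) * α),
      sub_mem (Submodule.smul_mem _ _ (kernelTerm_mem_kernelSpan _ _ _))
        (Submodule.smul_mem _ _ (kernelTerm_mem_kernelSpan _ _ _)), fun ξ hξ => ?_⟩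
    have h := hasDerivAt_kernelTerm α (b + j * α) hξ
    rw [e₁, e₀] at h
    exact h
  | zero => exact ⟨0, zero_mem _, fun ξ _ => hasDerivAt_const ξ 0⟩
  | add f h _ _ hf hh =>
    obtain ⟨f', hf'mem, hf'⟩ := hf
    obtain ⟨h', hh'mem, hh'⟩ := hh
    exact ⟨f' + h', add_mem hf'mem hh'mem, fun ξ hξ => (hf' ξ hξ).add (hh' ξ hξ)⟩
  | smul a f _ hf =>
    obtain ⟨f', hf'mem, hf'⟩ := hf
    exact ⟨a • f', Submodule.smul_mem _ a hf'mem, fun ξ hξ => (hf' ξ hξ).const_smul a⟩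

lemma integrableOn_of_mem_kernelSpan (hα : 0 < α) {ε : ℝ} (hε : 0 < ε)
    (hg : g ∈ kernelSpan α b) : IntegrableOn g (Ioi ε) := by
  induction hg using Submodule.span_induction with
  | mem f hf => obtain ⟨j, rfl⟩ := hf; exact integrableOn_kernelTerm hα _ hε
  | zero => exact integrableOn_zero
  | add f h _ _ hf hh => exact hf.add hh
  | smul a f _ hf => exact hf.smul a

lemma tendsto_atTop_of_mem_kernelSpan (hα : 0 < α) (hg : g ∈ kernelSpan α b) :
    Tendsto g atTop (𝓝 0) := by
  induction hg using Submodule.span_induction with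
  | mem f hf => obtain ⟨j, rfl⟩ := hf; exact tendsto_kernelTerm_atTop hα _
  | zero => exact tendsto_const_nhds
  | add f h _ _ hf hh =>
    have hsum := hf.add hh
    rw [add_zero] at hsum
    exact hsum
  | smul a f _ hf =>
    have hsmul := hf.const_smul a
    rw [smul_zero] at hsmul
    exact hsmul

end kernelSpan

lemma integrableOn_cos_mul {g : ℝ → ℝ} {S : Set ℝ} (hg : IntegrableOn g S) (y θ : ℝ) :
    IntegrableOn (fun ξ => cos (y * ξ + θ) * g ξ) S :=
  hg.bdd_mul (c := 1) (by fun_prop : Continuous fun ξ => cos (y * ξ + θ)).aestronglyMeasurable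
    (Eventually.of_forall fun _ => by simpa using abs_cos_le_one _)

lemma abs_integral_Ioi_cos_mul_le {g g' : ℝ → ℝ} {a y B : ℝ} (hy : 0 < y)
    (hderiv : ∀ ξ ∈ Ici a, HasDerivAt g (g' ξ) ξ) (hg : IntegrableOn g (Ioi a))
    (hg' : IntegrableOn g' (Ioi a)) (hlim : Tendsto g atTop (𝓝 0))
    (hB : ∀ θ, |∫ ξ in Ioi a, cos (y * ξ + θ) * g' ξ| ≤ B) (θ : ℝ) :
    |∫ ξ in Ioi a, cos (y * ξ + θ) * g ξ| ≤ (|g a| + B) / y := by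
  -- The sine integral produced by the integration by parts is a cosine integral with phase
  -- `θ - π / 2`, so `hB` controls it as well.
  have hsin : ∀ ξ, sin (y * ξ + θ) = cos (y * ξ + (θ - π / 2)) := fun ξ => by
    rw [← add_sub_assoc, cos_sub_pi_div_two]
  have hparts : ∫ ξ in Ioi a, (y * (cos (y * ξ + θ) * g ξ) + cos (y * ξ + (θ - π / 2)) * g' ξ)
      = 0 - sin (y * a + θ) * g a := by
    refine integral_Ioi_of_hasDerivAt_of_tendsto' (f := fun ξ => sin (y * ξ + θ) * g ξ)
      (fun ξ hξ => ?_) (((integrableOn_cos_mul hg y θ).const_mul y).add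
        (integrableOn_cos_mul hg' y _)) ?_
    · have hphase : HasDerivAt (fun ξ => y * ξ + θ) y ξ := by
        simpa using ((hasDerivAt_id ξ).const_mul y).add_const θ
      refine (hphase.sin.mul (hderiv ξ hξ)).congr_deriv ?_
      rw [← hsin]; ring
    · refine squeeze_zero_norm (fun ξ => ?_) (by simpa using hlim.norm)
      rw [norm_mul]
      exact mul_le_of_le_one_left (norm_nonneg _) (abs_sin_le_one _)
  rw [integral_add ((integrableOn_cos_mul hg y θ).const_mul y) (integrableOn_cos_mul hg' y _),
    integral_const_mul] at hparts
  set I := ∫ ξ in Ioi a, cos (y * ξ + θ) * g ξ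
  set I' := ∫ ξ in Ioi a, cos (y * ξ + (θ - π / 2)) * g' ξ
  have hyI : y * I = -(sin (y * a + θ) * g a) - I' := by linarith
  calc |I| = |y * I| / y := by rw [abs_mul, abs_of_pos hy, mul_div_cancel_left₀ _ hy.ne']
    _ = |-(sin (y * a + θ) * g a) - I'| / y := by rw [hyI]
    _ ≤ (|g a| + B) / y := by
        gcongr
        refine (abs_sub _ _).trans (add_le_add ?_ (hB _))
        rw [abs_neg, abs_mul]
        exact mul_le_of_le_one_left (abs_nonneg _) (abs_sin_le_one _)

lemma abs_setIntegral_Ioi_le_of_abs_le_rpow {f : ℝ → ℝ} {b C ε : ℝ} (hb : b < -1) (hε : 0 < ε)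
    (hf : ∀ ξ ∈ Ioi ε, |f ξ| ≤ C * ξ ^ b) :
    |∫ ξ in Ioi ε, f ξ| ≤ C * (ε ^ (b + 1) / -(b + 1)) := by
  have h := norm_integral_le_of_norm_le (f := f) ((integrableOn_Ioi_rpow_of_lt hb hε).const_mul C)
    ((ae_restrict_iff' measurableSet_Ioi).mpr (Eventually.of_forall fun ξ hξ =>
      (norm_eq_abs _).trans_le (hf ξ hξ)))
  rwa [integral_const_mul, integral_Ioi_rpow_of_lt hb hε, neg_div, ← div_neg] at h

lemma abs_setIntegral_Ioc_le_of_abs_le_rpow {f : ℝ → ℝ} {s ε : ℝ} (hs : -1 < s) (hε : 0 ≤ ε)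
    (hf : ∀ ξ ∈ Ioc 0 ε, |f ξ| ≤ ξ ^ s) :
    |∫ ξ in Ioc 0 ε, f ξ| ≤ ε ^ (s + 1) / (s + 1) := by
  have hint : IntegrableOn (fun ξ : ℝ => ξ ^ s) (Ioc 0 ε) :=
    (intervalIntegrable_iff_integrableOn_Ioc_of_le hε).mp
      (intervalIntegral.intervalIntegrable_rpow' (a := 0) (b := ε) hs)
  have h := norm_integral_le_of_norm_le (f := f) hint
    ((ae_restrict_iff' measurableSet_Ioc).mpr (Eventually.of_forall fun ξ hξ =>
      (norm_eq_abs _).trans_le (hf ξ hξ)))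
  rwa [← intervalIntegral.integral_of_le hε (f := fun ξ => ξ ^ s), integral_rpow (Or.inl hs),
    zero_rpow (by linarith), sub_zero] at h

lemma exists_abs_integral_Ioi_cos_mul_le_of_mem_kernelSpan {α b : ℝ} {g : ℝ → ℝ} (hα : 0 < α)
    (hg : g ∈ kernelSpan α b) :
    ∃ C, ∀ y > 0, ∀ θ, |∫ ξ in Ioi y⁻¹, cos (y * ξ + θ) * g ξ| ≤ C * y ^ (-(b + 1)) := by
  suffices key : ∀ n : ℕ, ∀ b : ℝ, b < n - 1 → ∀ g ∈ kernelSpan α b,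
      ∃ C, ∀ y > 0, ∀ θ, |∫ ξ in Ioi y⁻¹, cos (y * ξ + θ) * g ξ| ≤ C * y ^ (-(b + 1)) by
    obtain ⟨n, hn⟩ := exists_nat_gt (b + 1)
    exact key n b (by linarith) g hg
  intro n
  induction n with
  | zero =>
    intro b hb g hg
    obtain ⟨C, hC⟩ := exists_abs_le_rpow_of_mem_kernelSpan hg
    refine ⟨C / -(b + 1), fun y hy θ => ?_⟩
    have hyb : (y⁻¹) ^ (b + 1) = y ^ (-(b + 1)) := by rw [inv_rpow hy.le, rpow_neg hy.le]
    have h := abs_setIntegral_Ioi_le_of_abs_le_rpow (f := fun ξ => cos (y * ξ + θ) * g ξ)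
      (C := C) (by simpa using hb) (inv_pos.2 hy) fun ξ (hξ : y⁻¹ < ξ) => ?_
    · rwa [hyb, mul_div_assoc', mul_div_right_comm] at h
    · rw [abs_mul]
      exact (mul_le_of_le_one_left (abs_nonneg _) (abs_cos_le_one _)).trans
        (hC ξ ((inv_pos.2 hy).trans hξ))
  | succ n ih =>
    intro b hb g hg
    obtain ⟨C, hC⟩ := exists_abs_le_rpow_of_mem_kernelSpan hg
    obtain ⟨g', hg'mem, hg'⟩ := exists_hasDerivAt_of_mem_kernelSpan hg
    obtain ⟨C', hC'⟩ := ih (b - 1) (by push_cast at hb; linarith) g' hg'mem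
    refine ⟨C + C', fun y hy θ => ?_⟩
    have hε : 0 < y⁻¹ := inv_pos.2 hy
    have h := abs_integral_Ioi_cos_mul_le hy (fun ξ hξ => hg' ξ (hε.trans_le hξ))
      (integrableOn_of_mem_kernelSpan hα hε hg) (integrableOn_of_mem_kernelSpan hα hε hg'mem)
      (tendsto_atTop_of_mem_kernelSpan hα hg) (hC' y hy) θ
    have hgε : |g y⁻¹| ≤ C * y ^ (-b) := by
      simpa only [inv_rpow hy.le, rpow_neg hy.le] using hC y⁻¹ hε
    refine h.trans ?_
    rw [show -(b + 1) = -b - 1 by ring, rpow_sub_one hy.ne', show -(b - 1 + 1) = -b by ring,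
      mul_div_assoc']
    exact div_le_div_of_nonneg_right (by linarith) hy.le

lemma abs_cos_mul_kernelTerm_le (α y θ s : ℝ) {ξ : ℝ} (hξ : 0 < ξ) :
    |cos (y * ξ + θ) * kernelTerm α s ξ| ≤ ξ ^ s := by
  have hk := kernelTerm_nonneg α s hξ.le
  rw [abs_mul, abs_of_nonneg hk]
  exact (mul_le_of_le_one_left hk (abs_cos_le_one _)).trans
    (by simpa using kernelTerm_add_mul_le α s 0 hξ)

lemma integrableOn_Ioc_cos_mul_kernelTerm (α y θ : ℝ) {s : ℝ} (hs : -1 < s) {ε : ℝ} (hε : 0 ≤ ε) :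
    IntegrableOn (fun ξ => cos (y * ξ + θ) * kernelTerm α s ξ) (Ioc 0 ε) := by
  have hcont : ContinuousOn (fun ξ => cos (y * ξ + θ) * kernelTerm α s ξ) (Ioc 0 ε) :=
    (by fun_prop : Continuous fun ξ => cos (y * ξ + θ)).continuousOn.mul
      ((continuousOn_kernelTerm α s).mono Ioc_subset_Ioi_self)
  refine ((intervalIntegrable_iff_integrableOn_Ioc_of_le hε).mp
    (intervalIntegral.intervalIntegrable_rpow' (a := 0) (b := ε) hs)).mono'
    (hcont.aestronglyMeasurable measurableSet_Ioc) ?_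
  exact (ae_restrict_iff' measurableSet_Ioc).mpr (Eventually.of_forall fun ξ hξ =>
    (norm_eq_abs _).trans_le (abs_cos_mul_kernelTerm_le α y θ s hξ.1))

theorem Gfun_decay_general (α s : ℝ) (hα0 : 0 < α) (hs0 : 0 < s) :
    ∃ C : ℝ, 0 < C ∧ ∀ x : ℝ, 1 ≤ |x| → |Gfun α s x| ≤ C * |x| ^ (-(s + 1)) := by
  obtain ⟨C, hC⟩ := exists_abs_integral_Ioi_cos_mul_le_of_mem_kernelSpan hα0
    (by simpa using kernelTerm_mem_kernelSpan α s 0)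
  refine ⟨π⁻¹ * (1 / (s + 1) + |C|), by positivity, fun x hx => ?_⟩
  have hy : 0 < |x| := one_pos.trans_le hx
  have hε : 0 < |x|⁻¹ := inv_pos.2 hy
  have hG : Gfun α s x = π⁻¹ * ((∫ ξ in Ioc 0 |x|⁻¹, cos (|x| * ξ + 0) * kernelTerm α s ξ)
      + ∫ ξ in Ioi |x|⁻¹, cos (|x| * ξ + 0) * kernelTerm α s ξ) := by
    rw [← setIntegral_union (Ioc_disjoint_Ioi le_rfl) measurableSet_Ioi
      (integrableOn_Ioc_cos_mul_kernelTerm α _ 0 (by linarith) hε.le)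
      (integrableOn_cos_mul (integrableOn_kernelTerm hα0 s hε) _ 0),
      Ioc_union_Ioi_eq_Ioi hε.le, Gfun, one_div]
    congr 1
    refine setIntegral_congr_fun measurableSet_Ioi fun ξ _ => ?_
    rcases abs_choice x with h | h <;> simp [h, kernelTerm, mul_right_comm, mul_assoc]
  have hnear := abs_setIntegral_Ioc_le_of_abs_le_rpow (by linarith) hε.le
    fun ξ hξ => abs_cos_mul_kernelTerm_le α |x| 0 s hξ.1
  rw [inv_rpow hy.le, ← rpow_neg hy.le] at hnear
  rw [hG, abs_mul, abs_of_pos (inv_pos.2 pi_pos), mul_assoc]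
  gcongr
  calc _ ≤ _ := abs_add_le _ _
    _ ≤ |x| ^ (-(s + 1)) / (s + 1) + C * |x| ^ (-(s + 1)) := add_le_add hnear (hC _ hy 0)
    _ ≤ (1 / (s + 1) + |C|) * |x| ^ (-(s + 1)) := by
        rw [add_mul, one_div_mul_eq_div]
        gcongr
        exact le_abs_self C

/-- For `α, s ∈ (0,2)` there is a constant `C` with `|G_s(x)| ≤ C |x|^{-(s+1)}` for `|x| ≥ 1`. -/
theorem Gfun_decay (α s : ℝ) (hα0 : 0 < α) (hα2 : α < 2) (hs0 : 0 < s) (hs2 : s < 2) :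
    ∃ C : ℝ, 0 < C ∧ ∀ x : ℝ, 1 ≤ |x| → |Gfun α s x| ≤ C * |x| ^ (-(s + 1)) :=
  Gfun_decay_general α s hα0 hs0
end

section
/- Let α ∈ (0,2) and s ∈ (0,2). Define H_s(x) = (1/π) ∫_0^∞ sin(xξ) e^{-ξ^α} ξ^{s+1} dξ (so that ((-Δ)^{s/2} ∂_x K_1^α)(x) = -H_s(x)). Then there exists a constant C (depending on α and s) such that |H_s(x)| ≤ C |x|^{-(s+2)} for all x with |x| ≥ 1. -/
open MeasureTheory Real Set Filter

/-- `H_s(x) = (1/π) ∫_0^∞ sin(xξ) e^{-ξ^α} ξ^{s+1} dξ`, so that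
`((-Δ)^{s/2} ∂_x K_1^α)(x) = -H_s(x)`. -/
noncomputable def Hfun (α s x : ℝ) : ℝ :=
  (1 / Real.pi) * ∫ ξ in Set.Ioi (0 : ℝ), Real.sin (x * ξ) * Real.exp (-ξ ^ α) * ξ ^ (s + 1)

/-! Substituting `ξ = e^w` turns `H_s(x)` into `(1/π) Im ∫_ℝ F(u) du` for the entire function
`F(w) = exp(i x e^w - e^{αw} + (s+2) w)`. For `x > 0` the line of integration can be moved to
`Im w = π/4`: on the vertical sides `|F|` is at most `exp((s+2) u - cos(απ/4) e^{αu})`, which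
vanishes at both ends because `α < 2` keeps `cos(απ/4) > 0`. On the new line
`|F(u + iπ/4)| ≤ exp((s+2) u - x sin(π/4) e^u)`, and the integral of this bound is
`Γ(s+2) (x sin(π/4))^{-(s+2)}`. Since `H_s` is odd in `x`, this covers `x < 0` as well. -/

open scoped Topology Interval

section LogSubstitution

variable {F : Type*} [NormedAddCommGroup F] [NormedSpace ℝ F]

theorem integral_Ioi_eq_integral_exp_smul (g : ℝ → F) :
    ∫ ξ in Ioi 0, g ξ = ∫ u, rexp u • g (rexp u) := by
  have h := integral_image_eq_integral_abs_deriv_smul MeasurableSet.univ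
    (fun u _ => (hasDerivAt_exp u).hasDerivWithinAt) exp_injective.injOn g
  simp_rw [image_univ, range_exp, abs_of_pos (exp_pos _), setIntegral_univ] at h
  exact h

theorem integrableOn_Ioi_iff_integrable_exp_smul (g : ℝ → F) :
    IntegrableOn g (Ioi 0) ↔ Integrable fun u => rexp u • g (rexp u) := by
  have h := integrableOn_image_iff_integrableOn_abs_deriv_smul MeasurableSet.univ
    (fun u _ => (hasDerivAt_exp u).hasDerivWithinAt) exp_injective.injOn g
  simp_rw [image_univ, range_exp, abs_of_pos (exp_pos _), integrableOn_univ] at h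
  exact h

end LogSubstitution

section GammaIntegral

variable {p c : ℝ}

theorem exp_mul_rpow_mul_exp_neg_exp (u : ℝ) :
    rexp u * ((rexp u) ^ (p - 1) * rexp (-(c * rexp u))) = rexp (p * u - c * rexp u) := by
  rw [← exp_mul, ← exp_add, ← exp_add]
  ring_nf

theorem integral_exp_mul_sub_mul_exp (hp : 0 < p) (hc : 0 < c) :
    ∫ u, rexp (p * u - c * rexp u) = (1 / c) ^ p * Real.Gamma p := by
  rw [← integral_rpow_mul_exp_neg_mul_Ioi hp hc, integral_Ioi_eq_integral_exp_smul]
  simp_rw [smul_eq_mul, exp_mul_rpow_mul_exp_neg_exp]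

theorem integrable_exp_mul_sub_mul_exp (hp : 0 < p) (hc : 0 < c) :
    Integrable fun u => rexp (p * u - c * rexp u) :=
  .of_integral_ne_zero (by rw [integral_exp_mul_sub_mul_exp hp hc]; positivity)

theorem tendsto_exp_mul_sub_mul_exp_atTop {k : ℝ} (hc : 0 < c) (hk : 0 < k) :
    Tendsto (fun u => rexp (p * u - c * rexp (k * u))) atTop (𝓝 0) := by
  have h := (tendsto_rpow_mul_exp_neg_mul_atTop_nhds_zero (p / k) c hc).comp
    (tendsto_exp_atTop.comp (tendsto_id.const_mul_atTop hk))
  refine h.congr fun u => ?_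
  simp only [Function.comp_apply, id]
  rw [← exp_mul, ← exp_add]
  congr 1
  field_simp
  ring

theorem tendsto_exp_mul_sub_mul_exp_atBot {k : ℝ} (hp : 0 < p) (hc : 0 ≤ c) :
    Tendsto (fun u => rexp (p * u - c * rexp (k * u))) atBot (𝓝 0) :=
  squeeze_zero (fun _ => (exp_pos _).le)
    (fun u => exp_le_exp.mpr (sub_le_self _ (by positivity)))
    (tendsto_exp_atBot.comp (tendsto_id.const_mul_atBot hp))

end GammaIntegral

section ContourShift

open Complex

variable {E : Type*} [NormedAddCommGroup E] [NormedSpace ℂ E]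

theorem tendsto_integral_vertical_zero_of_norm_le {f : ℂ → E} {b : ℝ} {l : Filter ℝ}
    {M : ℝ → ℝ} (hM : Tendsto M l (𝓝 0)) (hfM : ∀ R : ℝ, ∀ v ∈ Ι 0 b, ‖f (R + v * I)‖ ≤ M R) :
    Tendsto (fun R : ℝ => ∫ v in 0..b, f (R + v * I)) l (𝓝 0) :=
  squeeze_zero_norm (fun R => intervalIntegral.norm_integral_le_of_norm_le_const (hfM R))
    (by simpa using hM.mul_const |b - 0|)

theorem integral_eq_integral_add_mul_I {f : ℂ → E} (hf : Differentiable ℂ f) (b : ℝ)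
    (h₀ : Integrable fun u : ℝ => f u) (hb : Integrable fun u : ℝ => f (u + b * I))
    (htop : Tendsto (fun R : ℝ => ∫ v in 0..b, f (R + v * I)) atTop (𝓝 0))
    (hbot : Tendsto (fun R : ℝ => ∫ v in 0..b, f (R + v * I)) atBot (𝓝 0)) :
    ∫ u : ℝ, f u = ∫ u : ℝ, f (u + b * I) := by
  have hrect : ∀ R : ℝ, (∫ u in -R..R, f u) - ∫ u in -R..R, f (u + b * I) =
      I • (∫ v in 0..b, f (-R + v * I)) - I • ∫ v in 0..b, f (R + v * I) := by
    intro R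
    have h := integral_boundary_rect_eq_zero_of_differentiableOn f (-R : ℝ) (R + b * I)
      hf.differentiableOn
    simp only [ofReal_re, ofReal_im, add_re, add_im, mul_re, mul_im, I_re, I_im, ofReal_zero,
      mul_zero, mul_one, sub_zero, zero_add, add_zero, zero_mul] at h
    rw [← sub_eq_zero, ← h, ofReal_neg]
    abel
  have hlim := ((intervalIntegral_tendsto_integral h₀ tendsto_neg_atTop_atBot tendsto_id).sub
    (intervalIntegral_tendsto_integral hb tendsto_neg_atTop_atBot tendsto_id))
  have hzero : Tendsto (fun R : ℝ => I • (∫ v in 0..b, f (-R + v * I))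
      - I • ∫ v in 0..b, f (R + v * I)) atTop (𝓝 0) := by
    simpa using ((hbot.comp tendsto_neg_atTop_atBot).const_smul I).sub (htop.const_smul I)
  exact sub_eq_zero.mp (tendsto_nhds_unique (hlim.congr hrect) hzero)

end ContourShift

namespace Hfun

open Complex

/-- The function `F` of the header, with `s + 2` replaced by `p`. -/
noncomputable def logIntegrand (α p x : ℝ) (w : ℂ) : ℂ :=
  cexp (x * I * cexp w - cexp (α * w) + p * w)

variable {α p x : ℝ}

theorem differentiable_logIntegrand : Differentiable ℂ (logIntegrand α p x) := by
  unfold logIntegrand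
  fun_prop

theorem norm_logIntegrand (u v : ℝ) :
    ‖logIntegrand α p x (u + v * I)‖ =
      rexp (p * u - x * rexp u * Real.sin v - rexp (α * u) * Real.cos (α * v)) := by
  rw [logIntegrand, norm_exp]
  congr 1
  simp only [add_re, sub_re, mul_re, ofReal_re, I_re, mul_zero, ofReal_im, I_im, mul_one,
    sub_self, exp_re, add_zero, add_im, mul_im, zero_add, zero_mul, exp_im, zero_sub, sub_zero]
  ring

theorem norm_logIntegrand_le (hα0 : 0 < α) (hα2 : α < 2) (u : ℝ) {v : ℝ}
    (hv : v ∈ Icc 0 (π / 4)) :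
    ‖logIntegrand α p x (u + v * I)‖ ≤
      rexp (p * u - x * Real.sin v * rexp u - Real.cos (α * (π / 4)) * rexp (α * u)) := by
  have hcos : Real.cos (α * (π / 4)) ≤ Real.cos (α * v) :=
    Real.cos_le_cos_of_nonneg_of_le_pi (by nlinarith [hv.1]) (by nlinarith [pi_pos])
      (by nlinarith [hv.2])
  rw [norm_logIntegrand]
  exact exp_le_exp.mpr (by nlinarith [exp_pos (α * u)])

theorem logIntegrand_ofReal (u : ℝ) :
    logIntegrand α p x u = rexp u •
      (cexp (↑(x * rexp u) * I) * ↑(rexp (-rexp u ^ α) * rexp u ^ (p - 1))) := by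
  have hreal : rexp u * (rexp (-rexp u ^ α) * rexp u ^ (p - 1)) = rexp (p * u - rexp (α * u)) := by
    rw [← exp_mul, ← exp_mul, ← Real.exp_add, ← Real.exp_add]
    ring_nf
  rw [real_smul, mul_left_comm, ← ofReal_mul, hreal, logIntegrand, ofReal_exp, ← Complex.exp_add]
  push_cast
  ring_nf

theorem integrableOn_cexp_mul_I_mul_exp_neg_rpow_mul_rpow (hα : 0 < α) (hp : 0 < p) :
    IntegrableOn (fun ξ : ℝ => cexp (↑(x * ξ) * I) * ↑(rexp (-ξ ^ α) * ξ ^ (p - 1))) (Ioi 0) := by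
  refine Integrable.mono' (integrableOn_rpow_mul_exp_neg_rpow (by linarith : -1 < p - 1) hα)
    (by fun_prop) ((ae_restrict_iff' measurableSet_Ioi).mpr (ae_of_all _ fun ξ hξ => ?_))
  rw [norm_mul, norm_exp_ofReal_mul_I, one_mul, norm_real,
    Real.norm_of_nonneg (mul_nonneg (exp_pos _).le (rpow_nonneg (le_of_lt hξ) _)),
    mul_comm]

theorem integrable_logIntegrand (hα : 0 < α) (hp : 0 < p) :
    Integrable fun u : ℝ => logIntegrand α p x u := by
  simpa only [logIntegrand_ofReal] using (integrableOn_Ioi_iff_integrable_exp_smul _).mp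
    (integrableOn_cexp_mul_I_mul_exp_neg_rpow_mul_rpow (x := x) hα hp)

theorem integral_sin_mul_exp_neg_rpow_mul_rpow (hα : 0 < α) (hp : 0 < p) :
    ∫ ξ in Ioi 0, Real.sin (x * ξ) * rexp (-ξ ^ α) * ξ ^ (p - 1) =
      (∫ u : ℝ, logIntegrand α p x u).im := by
  have hG := integrableOn_cexp_mul_I_mul_exp_neg_rpow_mul_rpow (x := x) hα hp
  calc ∫ ξ in Ioi 0, Real.sin (x * ξ) * rexp (-ξ ^ α) * ξ ^ (p - 1)
      = ∫ ξ in Ioi 0, imCLM (cexp (↑(x * ξ) * I) * ↑(rexp (-ξ ^ α) * ξ ^ (p - 1))) := by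
        refine setIntegral_congr_fun measurableSet_Ioi fun ξ _ => ?_
        simp only [imCLM_apply, im_mul_ofReal, exp_ofReal_mul_I_im]
        ring
    _ = (∫ u : ℝ, logIntegrand α p x u).im := by
        rw [imCLM.integral_comp_comm hG, integral_Ioi_eq_integral_exp_smul]
        simp_rw [logIntegrand_ofReal, imCLM_apply]

theorem norm_integral_logIntegrand_le (hα0 : 0 < α) (hα2 : α < 2) (hp : 0 < p) (hx : 0 < x) :
    ‖∫ u : ℝ, logIntegrand α p x u‖ ≤ (1 / (x * Real.sin (π / 4))) ^ p * Real.Gamma p := by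
  set c := Real.cos (α * (π / 4))
  have hc : 0 < c := Real.cos_pos_of_mem_Ioo ⟨by nlinarith [pi_pos], by nlinarith [pi_pos]⟩
  have hxs : 0 < x * Real.sin (π / 4) := mul_pos hx (by rw [sin_pi_div_four]; positivity)
  have hside (R v : ℝ) (hv : v ∈ Ι 0 (π / 4)) :
      ‖logIntegrand α p x (R + v * I)‖ ≤ rexp (p * R - c * rexp (α * R)) := by
    rw [uIoc_of_le (by positivity)] at hv
    have hsin : 0 ≤ Real.sin v := sin_nonneg_of_nonneg_of_le_pi hv.1.le (by linarith [pi_pos, hv.2])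
    refine (norm_logIntegrand_le hα0 hα2 R (Ioc_subset_Icc_self hv)).trans (exp_le_exp.mpr ?_)
    nlinarith [mul_nonneg (mul_nonneg hx.le hsin) (exp_pos R).le]
  have htop (u : ℝ) :
      ‖logIntegrand α p x (u + ↑(π / 4) * I)‖ ≤ rexp (p * u - x * Real.sin (π / 4) * rexp u) := by
    refine (norm_logIntegrand_le hα0 hα2 u ⟨by positivity, le_rfl⟩).trans (exp_le_exp.mpr ?_)
    nlinarith [exp_pos (α * u)]
  have hbound := integrable_exp_mul_sub_mul_exp hp hxs
  have hshift : Integrable fun u : ℝ => logIntegrand α p x (u + ↑(π / 4) * I) :=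
    hbound.mono' (differentiable_logIntegrand.continuous.comp (by fun_prop)).aestronglyMeasurable
      (ae_of_all _ htop)
  rw [integral_eq_integral_add_mul_I differentiable_logIntegrand (π / 4)
    (integrable_logIntegrand hα0 hp) hshift
    (tendsto_integral_vertical_zero_of_norm_le (tendsto_exp_mul_sub_mul_exp_atTop hc hα0) hside)
    (tendsto_integral_vertical_zero_of_norm_le (tendsto_exp_mul_sub_mul_exp_atBot hp hc.le) hside),
    ← integral_exp_mul_sub_mul_exp hp hxs]
  exact norm_integral_le_of_norm_le hbound (ae_of_all _ htop)

end Hfun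

theorem Hfun_eq_im_integral_logIntegrand {α s x : ℝ} (hα : 0 < α) (hs : 0 < s + 2) :
    Hfun α s x = (1 / π) * (∫ u : ℝ, Hfun.logIntegrand α (s + 2) x u).im := by
  rw [Hfun, ← Hfun.integral_sin_mul_exp_neg_rpow_mul_rpow hα hs, add_sub_assoc]
  norm_num

theorem abs_Hfun_le {α s x : ℝ} (hα0 : 0 < α) (hα2 : α < 2) (hs : 0 < s + 2) (hx : 0 < x) :
    |Hfun α s x| ≤ Real.Gamma (s + 2) / (π * Real.sin (π / 4) ^ (s + 2)) * x ^ (-(s + 2)) := by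
  have hsin : 0 < Real.sin (π / 4) := by rw [sin_pi_div_four]; positivity
  rw [Hfun_eq_im_integral_logIntegrand hα0 hs, abs_mul, abs_of_pos (by positivity)]
  calc 1 / π * |(∫ u : ℝ, Hfun.logIntegrand α (s + 2) x u).im|
      ≤ 1 / π * ((1 / (x * Real.sin (π / 4))) ^ (s + 2) * Real.Gamma (s + 2)) := by
        gcongr
        exact (Complex.abs_im_le_norm _).trans
          (Hfun.norm_integral_logIntegrand_le hα0 hα2 hs hx)
    _ = _ := by
        rw [one_div (x * _), inv_rpow (by positivity), mul_rpow hx.le hsin.le, rpow_neg hx.le]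
        field_simp

theorem Hfun_neg (α s x : ℝ) : Hfun α s (-x) = -Hfun α s x := by
  rw [Hfun, Hfun, ← mul_neg, ← integral_neg]
  simp only [neg_mul, Real.sin_neg]

theorem Hfun_decay_general (α s : ℝ) (hα0 : 0 < α) (hα2 : α < 2) (hs0 : 0 < s) :
    ∃ C : ℝ, 0 < C ∧ ∀ x : ℝ, 1 ≤ |x| → |Hfun α s x| ≤ C * |x| ^ (-(s + 2)) := by
  have hs : 0 < s + 2 := by linarith
  have hsin : 0 < Real.sin (π / 4) := by rw [sin_pi_div_four]; positivity
  refine ⟨Real.Gamma (s + 2) / (π * Real.sin (π / 4) ^ (s + 2)),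
    div_pos (Gamma_pos_of_pos hs) (mul_pos pi_pos (rpow_pos_of_pos hsin _)), fun x hx => ?_⟩
  have habs : |Hfun α s x| = |Hfun α s (|x|)| := by
    rcases abs_choice x with h | h <;> simp only [h, Hfun_neg, abs_neg]
  rw [habs]
  exact abs_Hfun_le hα0 hα2 hs (by linarith)

/-- For `α, s ∈ (0,2)` there is a constant `C` with `|H_s(x)| ≤ C |x|^{-(s+2)}` for `|x| ≥ 1`. -/
theorem Hfun_decay (α s : ℝ) (hα0 : 0 < α) (hα2 : α < 2) (hs0 : 0 < s) (hs2 : s < 2) :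
    ∃ C : ℝ, 0 < C ∧ ∀ x : ℝ, 1 ≤ |x| → |Hfun α s x| ≤ C * |x| ^ (-(s + 2)) :=
  Hfun_decay_general α s hα0 hα2 hs0
end

section
/- Let α ∈ (0,2), β > 0 and 0 < ε ≤ m. Let z : ℝ → ℝ be continuously differentiable with bounded derivative and with ε ≤ z(x) ≤ m for all x ∈ ℝ. For r > 0 and x ∈ ℝ define I(z,r,x) = ∫_{|y|>r} ( z(x)^{β+1}/(β+1) + β z(x+y)^{β+1}/(β+1) − z(x) z(x+y)^β ) |y|^{-1-α} dy. Then there exists a constant C (depending only on β, ε, m and α) such that |I(z,r,x)| ≤ C (‖z‖_{L^∞(ℝ)} + ‖z'‖_{L^∞(ℝ)})^2 for all r > 0 and x ∈ ℝ. Moreover I(z,r,x) ≥ 0. -/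
open MeasureTheory Real Set Filter

/-!
The integrand is `|y| ^ (-1-α)` times the Bregman divergence `D(a, b)` of `t ↦ t ^ (β+1) / (β+1)`
at `a = z x`, `b = z (x + y)`, which is nonnegative by Young's inequality. Since
`D(a, b) + D(b, a) = (a - b) (a ^ β - b ^ β)` and `t ↦ t ^ β` is Lipschitz on `[ε, m]`,
`D(a, b) ≤ K (a - b) ^ 2`. Bounding `|z x - z (x + y)|` both by `2 ‖z‖_∞` and by `‖z'‖_∞ |y|`
leaves the integrability of `min 1 (y ^ 2) |y| ^ (-1-α)` on `ℝ`, which is where `0 < α < 2` enters.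
-/

/-- The quantity
`I(z,r,x) = ∫_{|y|>r} ( z(x)^{β+1}/(β+1) + β z(x+y)^{β+1}/(β+1) − z(x) z(x+y)^β ) |y|^{-1-α} dy`. -/
noncomputable def Iquant (α β : ℝ) (z : ℝ → ℝ) (r x : ℝ) : ℝ :=
  ∫ y in {y : ℝ | r < |y|},
    (z x ^ (β + 1) / (β + 1) + β * z (x + y) ^ (β + 1) / (β + 1)
      - z x * z (x + y) ^ β) / |y| ^ (1 + α)

/-- The Bregman divergence of the convex function `t ↦ t ^ (β + 1) / (β + 1)`. -/
noncomputable def rpowBregman (β a b : ℝ) : ℝ :=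
  a ^ (β + 1) / (β + 1) + β * b ^ (β + 1) / (β + 1) - a * b ^ β

theorem rpowBregman_nonneg {β a b : ℝ} (hβ : 0 < β) (ha : 0 ≤ a) (hb : 0 ≤ b) :
    0 ≤ rpowBregman β a b := by
  have hpq : (β + 1).HolderConjugate ((β + 1) / β) :=
    Real.holderConjugate_iff.mpr ⟨by linarith, by field_simp; ring⟩
  have young := Real.young_inequality_of_nonneg ha (rpow_nonneg hb β) hpq
  rw [← rpow_mul hb, mul_div_cancel₀ _ hβ.ne', div_div_eq_mul_div] at young
  unfold rpowBregman
  rw [mul_comm β]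
  linarith

theorem rpowBregman_add_rpowBregman {β a b : ℝ} (hβ : β + 1 ≠ 0) (ha : 0 ≤ a) (hb : 0 ≤ b) :
    rpowBregman β a b + rpowBregman β b a = (a - b) * (a ^ β - b ^ β) := by
  unfold rpowBregman
  rw [rpow_add_one' ha hβ, rpow_add_one' hb hβ]
  field_simp
  ring

theorem abs_rpow_sub_rpow_le {β ε m a b : ℝ} (hβ : 0 ≤ β) (hε : 0 < ε)
    (ha : a ∈ Icc ε m) (hb : b ∈ Icc ε m) :
    |a ^ β - b ^ β| ≤ β * max (ε ^ (β - 1)) (m ^ (β - 1)) * |a - b| := by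
  have hderiv : ∀ t ∈ Icc ε m,
      HasDerivWithinAt (fun t : ℝ => t ^ β) (β * t ^ (β - 1)) (Icc ε m) t :=
    fun t ht => (hasDerivAt_rpow_const (Or.inl (hε.trans_le ht.1).ne')).hasDerivWithinAt
  have hbound : ∀ t ∈ Icc ε m, ‖β * t ^ (β - 1)‖ ≤ β * max (ε ^ (β - 1)) (m ^ (β - 1)) := by
    intro t ht
    have ht0 : 0 < t := hε.trans_le ht.1
    rw [norm_mul, norm_of_nonneg hβ, norm_of_nonneg (rpow_nonneg ht0.le _)]
    gcongr
    rcases le_total 1 β with h1 | h1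
    · exact le_max_of_le_right (rpow_le_rpow ht0.le ht.2 (by linarith))
    · exact le_max_of_le_left (rpow_le_rpow_of_nonpos hε ht.1 (by linarith))
  simpa only [norm_eq_abs] using
    (convex_Icc ε m).norm_image_sub_le_of_norm_hasDerivWithin_le hderiv hbound hb ha

theorem rpowBregman_le_mul_sq {β ε m a b : ℝ} (hβ : 0 < β) (hε : 0 < ε)
    (ha : a ∈ Icc ε m) (hb : b ∈ Icc ε m) :
    rpowBregman β a b ≤ β * max (ε ^ (β - 1)) (m ^ (β - 1)) * (a - b) ^ 2 := by
  have ha0 : 0 ≤ a := hε.le.trans ha.1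
  have hb0 : 0 ≤ b := hε.le.trans hb.1
  calc rpowBregman β a b ≤ rpowBregman β a b + rpowBregman β b a :=
        le_add_of_nonneg_right (rpowBregman_nonneg hβ hb0 ha0)
    _ = (a - b) * (a ^ β - b ^ β) := rpowBregman_add_rpowBregman (by linarith) ha0 hb0
    _ ≤ |a - b| * |a ^ β - b ^ β| := (le_abs_self _).trans (abs_mul _ _).le
    _ ≤ |a - b| * (β * max (ε ^ (β - 1)) (m ^ (β - 1)) * |a - b|) := by
        gcongr; exact abs_rpow_sub_rpow_le hβ.le hε ha hb
    _ = β * max (ε ^ (β - 1)) (m ^ (β - 1)) * (a - b) ^ 2 := by rw [← sq_abs (a - b)]; ring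

theorem sq_le_four_mul_sq_mul_min {d S L y : ℝ} (hS : |d| ≤ 2 * S) (hL0 : 0 ≤ L)
    (hL : |d| ≤ L * |y|) :
    d ^ 2 ≤ 4 * (S + L) ^ 2 * min 1 (y ^ 2) := by
  have hS0 : 0 ≤ S := by linarith [abs_nonneg d]
  rw [← sq_abs d]
  rcases le_total (y ^ 2) 1 with hy | hy
  · rw [min_eq_right hy]
    calc |d| ^ 2 ≤ (L * |y|) ^ 2 := pow_le_pow_left₀ (abs_nonneg d) hL 2
      _ = L ^ 2 * y ^ 2 := by rw [mul_pow, sq_abs]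
      _ ≤ 4 * (S + L) ^ 2 * y ^ 2 := by gcongr; nlinarith
  · rw [min_eq_left hy]
    calc |d| ^ 2 ≤ (2 * S) ^ 2 := pow_le_pow_left₀ (abs_nonneg d) hS 2
      _ ≤ 4 * (S + L) ^ 2 * 1 := by nlinarith

theorem integrable_min_one_sq_mul_abs_rpow {α : ℝ} (hα0 : 0 < α) (hα2 : α < 2) :
    Integrable fun y : ℝ => min 1 (y ^ 2) * |y| ^ (-(1 + α)) := by
  set k : ℝ → ℝ := fun y => min 1 (y ^ 2) * |y| ^ (-(1 + α))
  have near : IntegrableOn k (Ioc 0 1) := by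
    have h := intervalIntegral.intervalIntegrable_rpow' (r := 1 - α) (by linarith) (a := 0) (b := 1)
    rw [intervalIntegrable_iff_integrableOn_Ioc_of_le zero_le_one] at h
    refine h.congr_fun (fun y hy => ?_) measurableSet_Ioc
    have hy2 : y ^ 2 ≤ 1 := by nlinarith [hy.1, hy.2]
    simp only [k, min_eq_right hy2, abs_of_pos hy.1]
    rw [← rpow_natCast, ← rpow_add hy.1]
    norm_num
    ring_nf
  have far : IntegrableOn k (Ioi 1) := by
    refine ((integrableOn_Ioi_rpow_iff zero_lt_one).2 (by linarith : -(1 + α) < -1)).congr_fun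
      (fun y hy => ?_) measurableSet_Ioi
    have hy2 : 1 ≤ y ^ 2 := by nlinarith [mem_Ioi.1 hy]
    simp only [k, min_eq_left hy2, one_mul, abs_of_pos (zero_lt_one.trans (mem_Ioi.1 hy))]
  have pos : IntegrableOn k (Ioi 0) := by
    rw [← Ioc_union_Ioi_eq_Ioi zero_le_one]
    exact near.union far
  have neg : IntegrableOn k (Iio 0) := by
    rw [← (Measure.measurePreserving_neg volume).integrableOn_comp_preimage
      (Homeomorph.neg ℝ).measurableEmbedding]
    simpa only [k, Function.comp_def, neg_sq, abs_neg, neg_preimage, neg_Iio, neg_neg, neg_zero]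
      using pos
  rw [← integrableOn_univ, ← Iio_union_Ici (a := (0 : ℝ)), integrableOn_union,
    integrableOn_Ici_iff_integrableOn_Ioi]
  exact ⟨neg, pos⟩

theorem Iquant_nonneg {α β : ℝ} (hβ : 0 < β) {z : ℝ → ℝ} (hz : ∀ x, 0 ≤ z x) (r x : ℝ) :
    0 ≤ Iquant α β z r x :=
  integral_nonneg fun y =>
    div_nonneg (rpowBregman_nonneg hβ (hz x) (hz (x + y))) (rpow_nonneg (abs_nonneg y) _)

theorem abs_Iquant_le {α β ε m S L : ℝ} (hα0 : 0 < α) (hα2 : α < 2) (hβ : 0 < β) (hε : 0 < ε)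
    {z : ℝ → ℝ} (hz : ∀ x, z x ∈ Icc ε m) (hS : ∀ x, |z x| ≤ S) (hL0 : 0 ≤ L)
    (hL : ∀ u v, |z u - z v| ≤ L * |u - v|) (r x : ℝ) :
    |Iquant α β z r x| ≤
      4 * (β * max (ε ^ (β - 1)) (m ^ (β - 1))) * (∫ y, min 1 (y ^ 2) * |y| ^ (-(1 + α))) *
        (S + L) ^ 2 := by
  set K := β * max (ε ^ (β - 1)) (m ^ (β - 1))
  set k : ℝ → ℝ := fun y => min 1 (y ^ 2) * |y| ^ (-(1 + α))
  have hk : Integrable k := integrable_min_one_sq_mul_abs_rpow hα0 hα2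
  have hk_nonneg : ∀ y, 0 ≤ 4 * K * (S + L) ^ 2 * k y := fun y => by positivity
  have pointwise : ∀ y, ‖rpowBregman β (z x) (z (x + y)) / |y| ^ (1 + α)‖ ≤
      4 * K * (S + L) ^ 2 * k y := by
    intro y
    have hdiff : (z x - z (x + y)) ^ 2 ≤ 4 * (S + L) ^ 2 * min 1 (y ^ 2) := by
      refine sq_le_four_mul_sq_mul_min ?_ hL0 (by simpa using hL x (x + y))
      linarith [abs_sub (z x) (z (x + y)), hS x, hS (x + y)]
    have hden : 0 ≤ |y| ^ (1 + α) := rpow_nonneg (abs_nonneg y) _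
    rw [norm_of_nonneg (div_nonneg (rpowBregman_nonneg hβ (hε.le.trans (hz x).1)
      (hε.le.trans (hz (x + y)).1)) hden)]
    calc rpowBregman β (z x) (z (x + y)) / |y| ^ (1 + α)
        ≤ K * (z x - z (x + y)) ^ 2 / |y| ^ (1 + α) :=
          div_le_div_of_nonneg_right (rpowBregman_le_mul_sq hβ hε (hz x) (hz (x + y))) hden
      _ ≤ K * (4 * (S + L) ^ 2 * min 1 (y ^ 2)) / |y| ^ (1 + α) := by gcongr
      _ = 4 * K * (S + L) ^ 2 * k y := by
          simp only [k, rpow_neg (abs_nonneg y), div_eq_mul_inv]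
          ring
  calc |Iquant α β z r x|
      ≤ ∫ y in {y : ℝ | r < |y|}, 4 * K * (S + L) ^ 2 * k y :=
        norm_integral_le_of_norm_le (hk.const_mul _).integrableOn (ae_of_all _ pointwise)
    _ ≤ ∫ y, 4 * K * (S + L) ^ 2 * k y :=
        setIntegral_le_integral (hk.const_mul _) (ae_of_all _ hk_nonneg)
    _ = 4 * K * (∫ y, k y) * (S + L) ^ 2 := by rw [integral_const_mul]; ring

theorem Iquant_bounded_nonneg_general (α β ε m : ℝ) (hα0 : 0 < α) (hα2 : α < 2)
    (hβ : 0 < β) (hε : 0 < ε) :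
    ∃ C : ℝ, 0 < C ∧
      ∀ (z : ℝ → ℝ) (L : ℝ), ContDiff ℝ 1 z →
        (∀ x, ε ≤ z x ∧ z x ≤ m) → (∀ x, |deriv z x| ≤ L) →
        ∀ r > (0 : ℝ), ∀ x : ℝ,
          |Iquant α β z r x| ≤ C * ((⨆ y, |z y|) + ⨆ y, |deriv z y|) ^ 2 ∧
          0 ≤ Iquant α β z r x := by
  refine ⟨max (4 * (β * max (ε ^ (β - 1)) (m ^ (β - 1))) *
      ∫ y : ℝ, min 1 (y ^ 2) * |y| ^ (-(1 + α))) 1, lt_max_of_lt_right one_pos,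
    fun z L hz hzm hL r _ x => ⟨?_, Iquant_nonneg hβ (fun x => hε.le.trans (hzm x).1) r x⟩⟩
  have hz_le_sup : ∀ y, |z y| ≤ ⨆ y, |z y| :=
    le_ciSup ⟨m, by rintro _ ⟨y, rfl⟩; exact abs_le.2 ⟨by linarith [hzm y], (hzm y).2⟩⟩
  have hz'_le_sup : ∀ y, |deriv z y| ≤ ⨆ y, |deriv z y| :=
    le_ciSup ⟨L, by rintro _ ⟨y, rfl⟩; exact hL y⟩
  have hz_lip : ∀ u v, |z u - z v| ≤ (⨆ y, |deriv z y|) * |u - v| := fun u v =>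
    convex_univ.norm_image_sub_le_of_norm_deriv_le
      (fun t _ => (hz.differentiable one_ne_zero).differentiableAt)
      (fun t _ => hz'_le_sup t) (mem_univ v) (mem_univ u)
  exact (abs_Iquant_le hα0 hα2 hβ hε hzm hz_le_sup ((abs_nonneg _).trans (hz'_le_sup 0))
    hz_lip r x).trans (mul_le_mul_of_nonneg_right (le_max_left _ _) (sq_nonneg _))

/-- For `α ∈ (0,2)`, `β > 0`, `0 < ε ≤ m`, and any `C¹` function `z` with bounded
derivative and `ε ≤ z ≤ m`, there is a constant `C` depending only on `β, ε, m, α` with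
`|I(z,r,x)| ≤ C (‖z‖_∞ + ‖z'‖_∞)²` for all `r > 0`, `x ∈ ℝ`; moreover `I(z,r,x) ≥ 0`. -/
theorem Iquant_bounded_nonneg (α β ε m : ℝ) (hα0 : 0 < α) (hα2 : α < 2)
    (hβ : 0 < β) (hε : 0 < ε) (hεm : ε ≤ m) :
    ∃ C : ℝ, 0 < C ∧
      ∀ (z : ℝ → ℝ) (L : ℝ), ContDiff ℝ 1 z →
        (∀ x, ε ≤ z x ∧ z x ≤ m) → (∀ x, |deriv z x| ≤ L) →
        ∀ r > (0 : ℝ), ∀ x : ℝ,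
          |Iquant α β z r x| ≤ C * ((⨆ y, |z y|) + ⨆ y, |deriv z y|) ^ 2 ∧
          0 ≤ Iquant α β z r x :=
  Iquant_bounded_nonneg_general α β ε m hα0 hα2 hβ hε
end

section
/- Let W : (0,∞) → ℝ be locally Lipschitz and let g : (0,∞) → [0,∞) be measurable. Suppose that for almost every t > 0 one has W'(t) + W(t)^2 + g(t) W(t) ≤ 0. Then max{W(t), 0} ≤ 1/t for all t > 0. -/
open MeasureTheory Real Set Filter

/-!
Where `W > 0`, the function `1 / W` is Lipschitz on compact intervals with
`(1 / W)' = -W' / W² ≥ 1 + g / W ≥ 1` almost everywhere, so the fundamental theorem of calculus for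
absolutely continuous functions gives `1 / W s + (t - s) ≤ 1 / W t` whenever `W > 0` on `[s, t]`.
In particular `W` decreases on such intervals, so it cannot reach a non-positive value to the left
of a point where it is positive; hence `W t > 0` forces `W > 0` on `(0, t]`, and letting `s → 0`
gives `t ≤ 1 / W t`.
-/

theorem AbsolutelyContinuousOnInterval.mul_sub_le_sub_of_le_hasDerivAt {f : ℝ → ℝ} {a b c : ℝ}
    (hf : AbsolutelyContinuousOnInterval f a b) (hab : a ≤ b)
    (hd : ∀ᵐ x, x ∈ Ioo a b → ∀ d, HasDerivAt f d x → c ≤ d) :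
    c * (b - a) ≤ f b - f a := by
  have hc : (fun _ => c) ≤ᵐ[volume.restrict (Icc a b)] deriv f := by
    rw [← Measure.restrict_congr_set Ioo_ae_eq_Icc, EventuallyLE,
      ae_restrict_iff' measurableSet_Ioo]
    filter_upwards [hd, hf.ae_differentiableAt] with x hdx hfx hx
    exact hdx hx _ (hfx (Ioo_subset_Icc_self.trans Icc_subset_uIcc hx)).hasDerivAt
  calc c * (b - a) = ∫ _ in a..b, c := by simp [mul_comm]
    _ ≤ ∫ x in a..b, deriv f x :=
      intervalIntegral.integral_mono_ae_restrict hab intervalIntegrable_const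
        hf.intervalIntegrable_deriv hc
    _ = f b - f a := hf.integral_deriv_eq_sub

theorem LipschitzOnWith.inv_of_le {α : Type*} [PseudoMetricSpace α] {f : α → ℝ} {K : NNReal}
    {s : Set α} {m : ℝ} (hf : LipschitzOnWith K f s) (hm : 0 < m) (hfm : ∀ x ∈ s, m ≤ f x) :
    LipschitzOnWith (K / (m.toNNReal ^ 2)) (fun x => (f x)⁻¹) s := by
  refine LipschitzOnWith.of_dist_le_mul fun x hx y hy => ?_
  have hfx := hm.trans_le (hfm x hx)
  have hfy := hm.trans_le (hfm y hy)
  have hmm : m ^ 2 ≤ f x * f y := by nlinarith [hfm x hx, hfm y hy]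
  rw [dist_eq, inv_sub_inv hfx.ne' hfy.ne', abs_div, abs_of_pos (mul_pos hfx hfy), abs_sub_comm,
    ← dist_eq, NNReal.coe_div, NNReal.coe_pow, coe_toNNReal _ hm.le, div_mul_eq_mul_div]
  gcongr
  exact hf.dist_le_mul x hx y hy

theorem one_le_of_hasDerivAt_inv {W : ℝ → ℝ} {x d : ℝ} (hWx : 0 < W x)
    (hW' : ∀ e, HasDerivAt W e x → e ≤ -W x ^ 2) (hd : HasDerivAt (fun y => (W y)⁻¹) d x) :
    1 ≤ d := by
  have hinv : HasDerivAt W (-d / (W x)⁻¹ ^ 2) x := by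
    simpa only [Pi.inv_def, inv_inv] using hd.inv (inv_ne_zero hWx.ne')
  have hle := hW' _ hinv
  rw [inv_pow, div_inv_eq_mul] at hle
  nlinarith [pow_pos hWx 2]

theorem inv_add_sub_le_inv {W : ℝ → ℝ} {K : NNReal} {s t : ℝ} (hst : s ≤ t)
    (hW : LipschitzOnWith K W (Icc s t)) (hpos : ∀ x ∈ Icc s t, 0 < W x)
    (hW' : ∀ᵐ x, x ∈ Ioo s t → 0 < W x → ∀ d, HasDerivAt W d x → d ≤ -W x ^ 2) :
    (W s)⁻¹ + (t - s) ≤ (W t)⁻¹ := by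
  obtain ⟨x₀, hx₀, hmin⟩ := isCompact_Icc.exists_isMinOn (nonempty_Icc.2 hst) hW.continuousOn
  have hinv : AbsolutelyContinuousOnInterval (fun x => (W x)⁻¹) s t := by
    rw [← uIcc_of_le hst] at hW hpos hmin hx₀
    exact (hW.inv_of_le (hpos x₀ hx₀) hmin).absolutelyContinuousOnInterval
  have hinv_deriv : ∀ᵐ x, x ∈ Ioo s t → ∀ d, HasDerivAt (fun y => (W y)⁻¹) d x → 1 ≤ d := by
    filter_upwards [hW'] with x hx hxst
    have hWx := hpos x (Ioo_subset_Icc_self hxst)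
    exact fun d => one_le_of_hasDerivAt_inv hWx (hx hxst hWx)
  linarith [hinv.mul_sub_le_sub_of_le_hasDerivAt hst hinv_deriv]

theorem pos_on_Icc_of_pos_right {W : ℝ → ℝ} {K : NNReal} {s t : ℝ}
    (hW : LipschitzOnWith K W (Icc s t))
    (hW' : ∀ᵐ x, x ∈ Ioo s t → 0 < W x → ∀ d, HasDerivAt W d x → d ≤ -W x ^ 2)
    (ht : 0 < W t) : ∀ x ∈ Icc s t, 0 < W x := by
  by_contra! hneg
  set Z := Icc s t ∩ W ⁻¹' Iic 0
  have hZ : IsCompact Z := isCompact_Icc.of_isClosed_subset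
    (hW.continuousOn.preimage_isClosed_of_isClosed isClosed_Icc isClosed_Iic) inter_subset_left
  obtain ⟨a, ⟨has, hWa⟩, hmax⟩ := hZ.exists_isGreatest hneg
  have hat : a < t := has.2.lt_of_ne fun h => (h ▸ hWa : W t ≤ 0).not_gt ht
  have hpos : ∀ x ∈ Ioc a t, 0 < W x := fun x hx =>
    not_le.1 fun hWx => hx.1.not_ge (hmax ⟨⟨has.1.trans hx.1.le, hx.2⟩, hWx⟩)
  have hmono : ∀ x ∈ Ioc a t, W t ≤ W x := by
    intro x hx
    have hxs : Icc x t ⊆ Icc s t := Icc_subset_Icc_left (has.1.trans hx.1.le)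
    have hpos' : ∀ y ∈ Icc x t, 0 < W y := fun y hy => hpos y ⟨hx.1.trans_le hy.1, hy.2⟩
    have hxt := inv_add_sub_le_inv hx.2 (hW.mono hxs) hpos' <| by
      filter_upwards [hW'] with y hy hyxt using hy ⟨has.1.trans_lt (hx.1.trans hyxt.1), hyxt.2⟩
    rw [← inv_le_inv₀ (hpos x hx) ht]
    linarith [hx.2]
  have hclosure : closure (Ioc a t) = Icc a t := closure_Ioc hat.ne
  have hWta : W t ≤ W a := le_on_closure (f := fun _ => W t) hmono continuousOn_const
    (hW.continuousOn.mono (hclosure ▸ Icc_subset_Icc_left has.1))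
    (hclosure ▸ left_mem_Icc.2 hat.le)
  exact (ht.trans_le hWta).not_ge hWa

theorem ode_positive_part_bound_general (W g : ℝ → ℝ)
    (hW : ∀ a b : ℝ, 0 < a → a ≤ b → ∃ K : NNReal, LipschitzOnWith K W (Set.Icc a b))
    (hg_nonneg : ∀ t, 0 ≤ g t)
    (hdiff : ∀ᵐ t ∂(volume.restrict (Set.Ioi (0 : ℝ))),
      ∀ d : ℝ, HasDerivAt W d t → d + (W t) ^ 2 + g t * W t ≤ 0) :
    ∀ t > (0 : ℝ), max (W t) 0 ≤ 1 / t := by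
  have hriccati : ∀ s t, 0 < s →
      ∀ᵐ x, x ∈ Ioo s t → 0 < W x → ∀ d, HasDerivAt W d x → d ≤ -W x ^ 2 := by
    intro s t hs
    filter_upwards [(ae_restrict_iff' measurableSet_Ioi).1 hdiff] with x hx hxst hWx d hd
    nlinarith [hx (hs.trans hxst.1) d hd, mul_nonneg (hg_nonneg x) hWx.le]
  intro t ht
  rcases le_or_gt (W t) 0 with hWt | hWt
  · exact max_le (hWt.trans (by positivity)) (by positivity)
  have hslope : ∀ s ∈ Ioc 0 t, t - s < (W t)⁻¹ := by
    rintro s ⟨hs, hst⟩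
    obtain ⟨K, hK⟩ := hW s t hs hst
    have hpos := pos_on_Icc_of_pos_right hK (hriccati s t hs) hWt
    have hst_inv := inv_add_sub_le_inv hst hK hpos (hriccati s t hs)
    linarith [inv_pos.2 (hpos s (left_mem_Icc.2 hst))]
  have ht_le : t ≤ (W t)⁻¹ := le_of_forall_pos_lt_add fun ε hε => by
    linarith [hslope (min ε t) ⟨lt_min hε ht, min_le_right ε t⟩, min_le_left ε t]
  rwa [max_eq_left hWt.le, one_div, ← le_inv_comm₀ ht hWt]

/-- If `W` is locally Lipschitz on `(0,∞)` and satisfies the differential inequality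
`W' + W² + g W ≤ 0` a.e. on `(0,∞)` (at a.e. point where the derivative exists),
with `g ≥ 0` measurable, then `max{W(t),0} ≤ 1/t` for all `t > 0`. -/
theorem ode_positive_part_bound (W g : ℝ → ℝ)
    (hW : ∀ a b : ℝ, 0 < a → a ≤ b → ∃ K : NNReal, LipschitzOnWith K W (Set.Icc a b))
    (hg_meas : Measurable g) (hg_nonneg : ∀ t, 0 ≤ g t)
    (hdiff : ∀ᵐ t ∂(volume.restrict (Set.Ioi (0 : ℝ))),
      ∀ d : ℝ, HasDerivAt W d t → d + (W t) ^ 2 + g t * W t ≤ 0) :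
    ∀ t > (0 : ℝ), max (W t) 0 ≤ 1 / t :=
  ode_positive_part_bound_general W g hW hg_nonneg hdiff
end

section
/- Let q > 1, t > 0 and M > 0. Let u : ℝ → [0,∞) be measurable and integrable with ∫_ℝ u(y) dy = M, and suppose the Oleinik-type condition u(x)^{q-1} − u(y)^{q-1} ≤ (x − y)/t holds for all y < x. Then u(x) ≤ ( (q/(q-1)) M )^{1/q} t^{-1/q} for every x ∈ ℝ. -/
open MeasureTheory Real Set Filter

/-!
Fix `x`, write `a = u x` and `p = q - 1`. Read from left to right, the Oleinik condition says that
`u ^ p` can drop at rate at most `1 / t`, so on `[x - t a^p, x]` the function `u` lies above the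
profile `((y - x) / t + a^p)^(1/p)`. The profile has mass `t · p / (p + 1) · a^(p + 1)`, which
therefore is at most `M`; solving for `a` gives the bound.
-/

theorem integral_sub_div_rpow {r t : ℝ} (hr : -1 < r) (ht : 0 < t) (c b : ℝ) :
    ∫ y in c..b, ((y - c) / t) ^ r = t * ((b - c) / t) ^ (r + 1) / (r + 1) := by
  rw [intervalIntegral.integral_comp_sub_right (fun z => (z / t) ^ r), sub_self,
    intervalIntegral.integral_comp_div (fun w => w ^ r) ht.ne', integral_rpow (Or.inl hr),
    zero_div, zero_rpow (by linarith), sub_zero, smul_eq_mul, mul_div_assoc]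

theorem rpow_le_of_oleinik {p t : ℝ} (hp : 0 < p) (ht : 0 < t) {u : ℝ → ℝ}
    (hnonneg : ∀ x, 0 ≤ u x)
    (holeinik : ∀ x y : ℝ, y < x → u x ^ p - u y ^ p ≤ (x - y) / t) {x y : ℝ}
    (hy : y ∈ Icc (x - t * u x ^ p) x) :
    ((y - (x - t * u x ^ p)) / t) ^ (1 / p) ≤ u y := by
  have hprofile : (y - (x - t * u x ^ p)) / t = u x ^ p - (x - y) / t := by
    field_simp; ring
  have hle : u x ^ p - (x - y) / t ≤ u y ^ p := by
    rcases hy.2.lt_or_eq with hyx | rfl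
    · linarith [holeinik x y hyx]
    · simp
  calc ((y - (x - t * u x ^ p)) / t) ^ (1 / p) ≤ (u y ^ p) ^ (1 / p) := by
        refine rpow_le_rpow (div_nonneg (by linarith [hy.1]) ht.le) (hprofile ▸ hle) ?_
        positivity
    _ = u y := by rw [← rpow_mul (hnonneg y), mul_one_div_cancel hp.ne', rpow_one]

theorem mul_rpow_add_one_le_integral_of_oleinik {p t : ℝ} (hp : 0 < p) (ht : 0 < t)
    {u : ℝ → ℝ} (hnonneg : ∀ x, 0 ≤ u x) (hint : Integrable u)
    (holeinik : ∀ x y : ℝ, y < x → u x ^ p - u y ^ p ≤ (x - y) / t) (x : ℝ) :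
    t * (p / (p + 1)) * u x ^ (p + 1) ≤ ∫ y, u y := by
  set c := x - t * u x ^ p
  have hcx : c ≤ x := sub_le_self x (by positivity [hnonneg x])
  have hprofile_cont : Continuous fun y => ((y - c) / t) ^ (1 / p) :=
    (by fun_prop : Continuous fun y => (y - c) / t).rpow_const fun _ => Or.inr (by positivity)
  calc t * (p / (p + 1)) * u x ^ (p + 1) = ∫ y in c..x, ((y - c) / t) ^ (1 / p) := by
        rw [integral_sub_div_rpow (by linarith [one_div_pos.2 hp]) ht, sub_sub_cancel,
          mul_div_cancel_left₀ _ ht.ne', ← rpow_mul (hnonneg x),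
          mul_add, mul_one_div_cancel hp.ne', mul_one, add_comm 1 p]
        field_simp
        ring
    _ ≤ ∫ y in c..x, u y :=
        intervalIntegral.integral_mono_on hcx (hprofile_cont.intervalIntegrable c x)
          hint.intervalIntegrable fun y hy => rpow_le_of_oleinik hp ht hnonneg holeinik hy
    _ ≤ ∫ y, u y := by
        rw [intervalIntegral.integral_of_le hcx]
        exact setIntegral_le_integral hint (Eventually.of_forall hnonneg)

theorem oleinik_implies_Linfty_bound_general (q t M : ℝ) (hq : 1 < q) (ht : 0 < t)
    (u : ℝ → ℝ) (hnonneg : ∀ x, 0 ≤ u x)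
    (hint : Integrable u volume) (hmass : ∫ y, u y = M)
    (holeinik : ∀ x y : ℝ, y < x → u x ^ (q - 1) - u y ^ (q - 1) ≤ (x - y) / t) :
    ∀ x : ℝ, u x ≤ (q / (q - 1) * M) ^ (1 / q) * t ^ (-(1 / q)) := by
  intro x
  have hq1 : 0 < q - 1 := sub_pos.2 hq
  have hM : 0 ≤ M := hmass ▸ integral_nonneg hnonneg
  have hbound := mul_rpow_add_one_le_integral_of_oleinik hq1 ht hnonneg hint holeinik x
  rw [sub_add_cancel, hmass] at hbound
  have hpow : u x ^ q ≤ q / (q - 1) * M * t⁻¹ :=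
    calc u x ^ q ≤ M / (t * ((q - 1) / q)) := (le_div_iff₀' (by positivity)).2 hbound
      _ = q / (q - 1) * M * t⁻¹ := by field_simp
  rw [rpow_neg ht.le, ← inv_rpow ht.le, ← mul_rpow (by positivity) (by positivity), one_div,
    le_rpow_inv_iff_of_pos (hnonneg x) (by positivity) (by linarith)]
  exact hpow

/-- If `u ≥ 0` is integrable with mass `M` and satisfies the Oleinik-type condition
`u(x)^{q-1} − u(y)^{q-1} ≤ (x−y)/t` for all `y < x`, then
`u(x) ≤ ((q/(q-1)) M)^{1/q} t^{-1/q}` for every `x`. -/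
theorem oleinik_implies_Linfty_bound (q t M : ℝ) (hq : 1 < q) (ht : 0 < t) (hM : 0 < M)
    (u : ℝ → ℝ) (hmeas : Measurable u) (hnonneg : ∀ x, 0 ≤ u x)
    (hint : Integrable u volume) (hmass : ∫ y, u y = M)
    (holeinik : ∀ x y : ℝ, y < x → u x ^ (q - 1) - u y ^ (q - 1) ≤ (x - y) / t) :
    ∀ x : ℝ, u x ≤ (q / (q - 1) * M) ^ (1 / q) * t ^ (-(1 / q)) :=
  oleinik_implies_Linfty_bound_general q t M hq ht u hnonneg hint hmass holeinik
end
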